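/- arXiv:2203.06596 — 4 statements merged into one kernel-verified Lean document; each statement's English description precedes it below -/
import Mathlib

section
/- Topological categories over Set correspond exactly to functors Set^op → InfL (the category of complete lattices and meet-preserving maps): every topological category induces such a functor via fibres and pullback maps, and conversely the Grothendieck construction of any functor F : Set^op → InfL is a topological category, where the initial lift of a structured source {f_i : X → p(X_i, A_i)} is ⋀_i F(f_i)(A_i), and these constructions are mutually inverse up to equivalence. -/
/-- A (fibre-small) concrete category over `Set`, presented by its fibres and
hom-sets, which are subsets of the set of functions between the underlying sets
(faithfulness is built in). -/
structure ConcreteCat where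
  Fib : Type → Type
  Hom : ∀ {X Y : Type}, Fib X → Fib Y → Set (X → Y)
  id_mem : ∀ {X : Type} (A : Fib X), (id : X → X) ∈ Hom A A
  comp_mem : ∀ {X Y Z : Type} {A : Fib X} {B : Fib Y} {C : Fib Z}
      {f : X → Y} {g : Y → Z}, f ∈ Hom A B → g ∈ Hom B C → (g ∘ f) ∈ Hom A C

namespace ConcreteCat

/-- The fibre (pre)order: `A ≤ B` iff the identity is a morphism `A → B`. -/
def le (C : ConcreteCat) {X : Type} (A B : C.Fib X) : Prop :=
  (id : X → X) ∈ C.Hom A B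

/-- `L` is an initial lift of the structured source `{f i : X → U (A i)}`. -/
def IsInitialLift (C : ConcreteCat) {X : Type} {ι : Type} {Y : ι → Type}
    (f : ∀ i, X → Y i) (A : ∀ i, C.Fib (Y i)) (L : C.Fib X) : Prop :=
  ∀ (Z : Type) (B : C.Fib Z) (g : Z → X),
    g ∈ C.Hom B L ↔ ∀ i, (f i ∘ g) ∈ C.Hom B (A i)

/-- A topological category: every structured source has a unique initial lift. -/
def Topological (C : ConcreteCat) : Prop :=
  ∀ (X ι : Type) (Y : ι → Type) (f : ∀ i, X → Y i) (A : ∀ i, C.Fib (Y i)),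
    ∃! L : C.Fib X, C.IsInitialLift f A L

end ConcreteCat

/-- The infimum of a subset with respect to an explicitly given complete
lattice structure. -/
def sInf' {α : Type} (c : CompleteLattice α) (s : Set α) : α := letI := c; sInf s

/-- The order of an explicitly given complete lattice structure. -/
def le' {α : Type} (c : CompleteLattice α) (a b : α) : Prop := letI := c; a ≤ b

/-- A functor `Set^op → InfL`: a complete lattice of "structures" for each set,
with meet-preserving (hence monotone) transition maps along functions. -/
structure InfLFunctor where
  L : Type → Type
  lat : ∀ X : Type, CompleteLattice (L X)
  map : ∀ {X Y : Type}, (X → Y) → L Y → L X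
  map_id : ∀ (X : Type) (a : L X), map (id : X → X) a = a
  map_comp : ∀ {X Y Z : Type} (f : X → Y) (g : Y → Z) (a : L Z),
      map (g ∘ f) a = map f (map g a)
  map_sInf : ∀ {X Y : Type} (f : X → Y) (s : Set (L Y)),
      map f (sInf' (lat Y) s) = sInf' (lat X) (map f '' s)
  map_mono : ∀ {X Y : Type} (f : X → Y) (a b : L Y),
      le' (lat Y) a b → le' (lat X) (map f a) (map f b)

/-- The Grothendieck construction of a functor `Set^op → InfL`, as a concrete
category over `Set`: objects over `X` are elements of `F.L X`, and a function
`f` is a morphism `(X, A) → (Y, B)` iff `A ≤ F.map f B`. -/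
def InfLFunctor.Groth (F : InfLFunctor) : ConcreteCat where
  Fib := F.L
  Hom {X Y} A B := {f : X → Y | le' (F.lat X) A (F.map f B)}
  id_mem {X} A := by
    show le' (F.lat X) A (F.map id A)
    rw [F.map_id]
    letI := F.lat X
    exact le_refl A
  comp_mem {X Y Z} A B C f g hf hg := by
    show le' (F.lat X) A (F.map (g ∘ f) C)
    rw [F.map_comp]
    letI := F.lat X
    exact le_trans hf (F.map_mono f _ _ hg)

/-!
In a topological category the initial lift of a single arrow `f : X → (Y, B)` is a
pullback `f^* B`, and initial lifts compose: lifting along `f` an initial lift of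
`(g i)` gives the initial lift of `(g i ∘ f)`. Uniqueness of initial lifts then
yields functoriality of `f^*`, antisymmetry of the fibre preorder (any object
equivalent to `A` is also an initial lift of `id : X → (X, A)`), and preservation
of meets, since a meet of `(B i)` is exactly an initial lift of the source
`(id : Y → (Y, B i))`. In a Grothendieck construction the initial lift is the
meet `⋀ i, F(f i)(A i)` because `F(g)` preserves meets.
-/

namespace ConcreteCat

variable {C : ConcreteCat}

def IsMeet (C : ConcreteCat) {X ι : Type} (B : ι → C.Fib X) (M : C.Fib X) : Prop :=
  (∀ i, C.le M (B i)) ∧ ∀ N, (∀ i, C.le N (B i)) → C.le N M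

theorem isInitialLift_id {X : Type} (A : C.Fib X) :
    C.IsInitialLift (fun _ : Unit => (id : X → X)) (fun _ => A) A :=
  fun _ _ _ => ⟨fun h _ => h, fun h => h ()⟩

namespace IsInitialLift

variable {X ι : Type} {Y : ι → Type} {f : ∀ i, X → Y i} {A : ∀ i, C.Fib (Y i)} {L : C.Fib X}

theorem le {L' : C.Fib X} (hL : C.IsInitialLift f A L) (hL' : C.IsInitialLift f A L') :
    C.le L L' :=
  (hL' X L id).2 ((hL X L id).1 (C.id_mem L))

theorem of_le {L' : C.Fib X} (hL : C.IsInitialLift f A L) (h : C.le L L') (h' : C.le L' L) :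
    C.IsInitialLift f A L' := fun Z B g =>
  ⟨fun hg => (hL Z B g).1 (C.comp_mem (g := id) hg h'),
    fun hg => C.comp_mem (g := id) ((hL Z B g).2 hg) h⟩

theorem comp {W : Type} {g : W → X} {P : C.Fib W} (hL : C.IsInitialLift f A L)
    (hP : C.IsInitialLift (fun _ : Unit => g) (fun _ => L) P) :
    C.IsInitialLift (fun i => f i ∘ g) A P := fun Z B h =>
  (hP Z B h).trans ⟨fun hh => (hL Z B (g ∘ h)).1 (hh ()), fun hh _ => (hL Z B (g ∘ h)).2 hh⟩

theorem isMeet {P : ι → C.Fib X} (hL : C.IsInitialLift f A L)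
    (hP : ∀ i, C.IsInitialLift (fun _ : Unit => f i) (fun _ => A i) (P i)) :
    C.IsMeet P L :=
  ⟨fun i => (hP i X L id).2 fun _ => (hL X L id).1 (C.id_mem L) i,
    fun N hN => (hL X N id).2 fun i => (hP i X N id).1 (hN i) ()⟩

end IsInitialLift

theorem IsMeet.le {X ι : Type} {B : ι → C.Fib X} {M M' : C.Fib X} (hM : C.IsMeet B M)
    (hM' : C.IsMeet B M') : C.le M M' :=
  hM'.2 M hM.1

namespace Topological

theorem eq_of_isInitialLift (hC : C.Topological) {X ι : Type} {Y : ι → Type}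
    {f : ∀ i, X → Y i} {A : ∀ i, C.Fib (Y i)} {L L' : C.Fib X} (hL : C.IsInitialLift f A L)
    (hL' : C.IsInitialLift f A L') : L = L' :=
  (hC X ι Y f A).unique hL hL'

theorem le_antisymm (hC : C.Topological) {X : Type} {A B : C.Fib X} (hAB : C.le A B)
    (hBA : C.le B A) : A = B :=
  hC.eq_of_isInitialLift (isInitialLift_id A) ((isInitialLift_id A).of_le hAB hBA)

variable (hC : C.Topological)

noncomputable def pullback {X Y : Type} (f : X → Y) (B : C.Fib Y) : C.Fib X :=
  (hC X Unit (fun _ => Y) (fun _ => f) (fun _ => B)).exists.choose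

theorem isInitialLift_pullback {X Y : Type} (f : X → Y) (B : C.Fib Y) :
    C.IsInitialLift (fun _ : Unit => f) (fun _ => B) (hC.pullback f B) :=
  (hC X Unit (fun _ => Y) (fun _ => f) (fun _ => B)).exists.choose_spec

theorem mem_hom_pullback_iff {X Y Z : Type} (f : X → Y) (B : C.Fib Y) (A : C.Fib Z)
    (g : Z → X) : g ∈ C.Hom A (hC.pullback f B) ↔ f ∘ g ∈ C.Hom A B :=
  (hC.isInitialLift_pullback f B Z A g).trans ⟨fun h => h (), fun h _ => h⟩

theorem pullback_id {X : Type} (B : C.Fib X) : hC.pullback id B = B :=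
  hC.eq_of_isInitialLift (hC.isInitialLift_pullback id B) (isInitialLift_id B)

theorem pullback_comp {X Y Z : Type} (f : X → Y) (g : Y → Z) (B : C.Fib Z) :
    hC.pullback (g ∘ f) B = hC.pullback f (hC.pullback g B) :=
  hC.eq_of_isInitialLift (hC.isInitialLift_pullback (g ∘ f) B)
    ((hC.isInitialLift_pullback g B).comp (hC.isInitialLift_pullback f _))

theorem isMeet_pullback {X Y ι : Type} (f : X → Y) {B : ι → C.Fib Y} {M : C.Fib Y}
    (hM : C.IsMeet B M) : C.IsMeet (fun i => hC.pullback f (B i)) (hC.pullback f M) := by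
  obtain ⟨M', hM', -⟩ := hC Y ι (fun _ => Y) (fun _ => id) B
  have hM'meet : C.IsMeet B M' := hM'.isMeet fun i => isInitialLift_id (B i)
  have hMlift : C.IsInitialLift (fun _ => id) B M :=
    hM'.of_le (hM'meet.le hM) (hM.le hM'meet)
  exact (hMlift.comp (hC.isInitialLift_pullback f M)).isMeet
    fun i => hC.isInitialLift_pullback f (B i)

end Topological

end ConcreteCat

namespace InfLFunctor

variable (F : InfLFunctor)

theorem groth_le_iff {X : Type} (a b : F.L X) : F.Groth.le a b ↔ le' (F.lat X) a b := by
  show le' (F.lat X) a (F.map id b) ↔ _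
  rw [F.map_id]

theorem groth_le_antisymm {X : Type} {a b : F.L X} (hab : F.Groth.le a b)
    (hba : F.Groth.le b a) : a = b :=
  letI := F.lat X
  _root_.le_antisymm ((F.groth_le_iff a b).1 hab) ((F.groth_le_iff b a).1 hba)

theorem isInitialLift_sInf {X ι : Type} {Y : ι → Type} (f : ∀ i, X → Y i)
    (A : ∀ i, F.L (Y i)) :
    F.Groth.IsInitialLift f A (sInf' (F.lat X) (Set.range fun i => F.map (f i) (A i))) := by
  intro Z (B : F.L Z) g
  show le' (F.lat Z) B (F.map g (sInf' (F.lat X) (Set.range fun i => F.map (f i) (A i)))) ↔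
    ∀ i, le' (F.lat Z) B (F.map (f i ∘ g) (A i))
  have himage : F.map g '' Set.range (fun i => F.map (f i) (A i)) =
      Set.range fun i => F.map (f i ∘ g) (A i) := by
    rw [← Set.range_comp]
    exact congrArg Set.range (funext fun i => (F.map_comp g (f i) (A i)).symm)
  rw [F.map_sInf, himage]
  let _ := F.lat Z
  exact le_sInf_iff.trans Set.forall_mem_range

theorem groth_topological : F.Groth.Topological := fun X ι Y f A =>
  ⟨_, F.isInitialLift_sInf f A, fun _ hL =>
    F.groth_le_antisymm (hL.le (F.isInitialLift_sInf f A)) ((F.isInitialLift_sInf f A).le hL)⟩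

end InfLFunctor

/-- Topological categories over `Set` correspond exactly to functors
`Set^op → InfL`.  (1) Every topological category has pullback maps `pb f`
given by initial lifts; these are functorial (`pb id = id`,
`pb (g ∘ f) = pb f ∘ pb g`), the fibres are (antisymmetric) complete preorders,
pullbacks preserve arbitrary meets, and the hom-sets are recovered from this
data: `g ∈ Hom A B ↔ A ≤ pb g B`.  (2) Conversely, the Grothendieck
construction of any `F : Set^op → InfL` is a topological category, in which the
initial lift of a structured source `{f i : X → p (Y i, A i)}` is
`⋀ i, F.map (f i) (A i)`, and its fibre order agrees with the order of `F.L X`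
(so the two constructions are mutually inverse up to equivalence). -/
theorem stmt2 :
    (∀ C : ConcreteCat, C.Topological →
      ∃ pb : ∀ {X Y : Type}, (X → Y) → C.Fib Y → C.Fib X,
        (∀ (X Y : Type) (f : X → Y) (B : C.Fib Y),
          C.IsInitialLift (fun _ : Unit => f) (fun _ => B) (pb f B)) ∧
        (∀ (X : Type) (A B : C.Fib X), C.le A B → C.le B A → A = B) ∧
        (∀ (X : Type) (B : C.Fib X), pb (id : X → X) B = B) ∧
        (∀ (X Y Z : Type) (f : X → Y) (g : Y → Z) (B : C.Fib Z),
          pb (g ∘ f) B = pb f (pb g B)) ∧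
        (∀ (X Y : Type) (f : X → Y) (ι : Type) (B : ι → C.Fib Y) (M : C.Fib Y),
          ((∀ i, C.le M (B i)) ∧ ∀ N, (∀ i, C.le N (B i)) → C.le N M) →
          ((∀ i, C.le (pb f M) (pb f (B i))) ∧
            ∀ N, (∀ i, C.le N (pb f (B i))) → C.le N (pb f M))) ∧
        (∀ (X Y : Type) (A : C.Fib X) (B : C.Fib Y) (g : X → Y),
          g ∈ C.Hom A B ↔ C.le A (pb g B))) ∧
    (∀ F : InfLFunctor,
      F.Groth.Topological ∧
      (∀ (X ι : Type) (Y : ι → Type) (f : ∀ i, X → Y i) (A : ∀ i, F.L (Y i)),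
        F.Groth.IsInitialLift f A
          (sInf' (F.lat X) (Set.range fun i => F.map (f i) (A i)))) ∧
      (∀ (X : Type) (a b : F.L X), F.Groth.le a b ↔ le' (F.lat X) a b)) := by
  refine ⟨fun C hC => ?_, fun F => ⟨F.groth_topological, fun _ _ _ => F.isInitialLift_sInf,
    fun _ => F.groth_le_iff⟩⟩
  exact ⟨hC.pullback, fun _ _ => hC.isInitialLift_pullback,
    fun _ _ _ => hC.le_antisymm, fun _ => hC.pullback_id, fun _ _ _ => hC.pullback_comp,
    fun _ _ f _ _ _ hM => hC.isMeet_pullback f hM,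
    fun _ _ A B g => (hC.mem_hom_pullback_iff g B A id).symm⟩
end

section
/- The assignment sending a binary relation R on a set X to the operator m_R on P(X) defined by m_R(S) = {x : ∀y, x R y → y ∈ S} is a fully faithful concrete functor from Kr to CABAO: a function f : X → Y is a morphism (X, R) → (Y, R') in Kr (i.e. relation-preserving) if and only if f⁻¹ ∘ m_{R'} ⊆ m_R ∘ f⁻¹ pointwise. -/
/-- The category `Kr` of Kripke frames. -/
def Kr : ConcreteCat where
  Fib X := X → X → Prop
  Hom {X Y} R R' := {f : X → Y | ∀ x x', R x x' → R' (f x) (f x')}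
  id_mem {X} R := fun x x' h => h
  comp_mem {X Y Z} A B C f g hf hg := fun x x' h => hg _ _ (hf _ _ h)

/-- The category `CABAO`. -/
def CABAO : ConcreteCat where
  Fib X := Set X → Set X
  Hom {X Y} m n := {f : X → Y | ∀ S : Set Y, f ⁻¹' (n S) ⊆ m (f ⁻¹' S)}
  id_mem {X} m := fun S x hx => hx
  comp_mem {X Y Z} A B C f g hf hg := fun S x hx => hf (g ⁻¹' S) (hg S hx)

/-- The box operator `m_R` on `P(X)` induced by a relation `R` on `X`. -/
def mRel {X : Type} (R : X → X → Prop) : Set X → Set X :=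
  fun S => {x : X | ∀ y : X, R x y → y ∈ S}

/-- `R ↦ (X, m_R)` is a fully faithful concrete functor `Kr → CABAO`:
`f` is a monotone map `(X, R) → (Y, R')` iff `f⁻¹ ∘ m_{R'} ⊆ m_R ∘ f⁻¹`
pointwise, i.e. iff `f` is a `CABAO`-morphism `(X, m_R) → (Y, m_{R'})`. -/
theorem stmt7 (X Y : Type) (R : X → X → Prop) (R' : Y → Y → Prop) (f : X → Y) :
    (f ∈ Kr.Hom (X := X) (Y := Y) R R' ↔
      f ∈ CABAO.Hom (X := X) (Y := Y) (mRel R) (mRel R')) ∧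
    ((∀ x x', R x x' → R' (f x) (f x')) ↔
      ∀ S : Set Y, f ⁻¹' (mRel R' S) ⊆ mRel R (f ⁻¹' S)) := by
  have key : (∀ x x', R x x' → R' (f x) (f x')) ↔
      ∀ S : Set Y, f ⁻¹' (mRel R' S) ⊆ mRel R (f ⁻¹' S) := by
    constructor
    · intro h S x hx y hxy
      exact hx (f y) (h x y hxy)
    · intro h x x' hxx'
      exact h {y | R' (f x) y} (fun y hy => hy) x' hxx'
  exact ⟨key, key⟩
end

section
/- Let F : A → B be a modal functor between modal categories with the semantic functor of B injective on objects. If F commutes with the pullback maps of all injective functions (F(i*A) = i*(F A) for every injection i : S ↪ X and A ∈ A_X), then F preserves the interpretation of the public announcement language L^PAL: for every (A, V) over X, every x ∈ X, and every formula φ of L^PAL, (A, V, x ⊨ φ) iff (F A, V, x ⊨ φ). -/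
/-- A modal category with pullbacks: a concrete category over `Set` together
with a concrete semantic functor into `CABAO` and pullback maps `pb f`
satisfying the universal property of initial (cartesian) lifts. -/
structure PALCat where
  Fib : Type → Type
  Hom : ∀ {X Y : Type}, Fib X → Fib Y → Set (X → Y)
  id_mem : ∀ {X : Type} (A : Fib X), (id : X → X) ∈ Hom A A
  comp_mem : ∀ {X Y Z : Type} {A : Fib X} {B : Fib Y} {C : Fib Z}
      {f : X → Y} {g : Y → Z}, f ∈ Hom A B → g ∈ Hom B C → (g ∘ f) ∈ Hom A C
  sem : ∀ {X : Type}, Fib X → Set X → Set X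
  sem_hom : ∀ {X Y : Type} (A : Fib X) (B : Fib Y) (f : X → Y),
      f ∈ Hom A B → ∀ S : Set Y, f ⁻¹' (sem B S) ⊆ sem A (f ⁻¹' S)
  pb : ∀ {X Y : Type}, (X → Y) → Fib Y → Fib X
  pb_initial : ∀ {X Y : Type} (f : X → Y) (B : Fib Y) (Z : Type) (C : Fib Z)
      (g : Z → X), g ∈ Hom C (pb f B) ↔ (f ∘ g) ∈ Hom C B

/-- The language `L^PAL`: basic modal logic extended with the public
announcement operators `[!φ]ψ` and `⟨!φ⟩ψ`. -/
inductive PALForm (P : Type) : Type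
  | atom : P → PALForm P
  | conj : PALForm P → PALForm P → PALForm P
  | neg : PALForm P → PALForm P
  | box : PALForm P → PALForm P
  | annBox : PALForm P → PALForm P → PALForm P
  | annDia : PALForm P → PALForm P → PALForm P

/-- Interpretation of `L^PAL` in a modal category with pullbacks: the update
by `!φ` restricts the model to the subset `⟦φ⟧` via the pullback of the
structure and of the valuation along the inclusion, and `[!φ]ψ` (resp.
`⟨!φ⟩ψ`) is interpreted via `∀_i` (resp. `∃_i`) along the inclusion `i`. -/
def interp {P : Type} (C : PALCat) :
    PALForm P → (X : Type) → C.Fib X → (P → Set X) → Set X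
  | .atom p, _, _, V => V p
  | .conj φ ψ, X, A, V => interp C φ X A V ∩ interp C ψ X A V
  | .neg φ, X, A, V => (interp C φ X A V)ᶜ
  | .box φ, X, A, V => C.sem A (interp C φ X A V)
  | .annBox φ ψ, X, A, V =>
      {x : X | ∀ h : x ∈ interp C φ X A V,
        (⟨x, h⟩ : {y : X // y ∈ interp C φ X A V}) ∈
          interp C ψ {y : X // y ∈ interp C φ X A V}
            (C.pb Subtype.val A) (fun p => Subtype.val ⁻¹' V p)}
  | .annDia φ ψ, X, A, V =>
      {x : X | ∃ h : x ∈ interp C φ X A V,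
        (⟨x, h⟩ : {y : X // y ∈ interp C φ X A V}) ∈
          interp C ψ {y : X // y ∈ interp C φ X A V}
            (C.pb Subtype.val A) (fun p => Subtype.val ⁻¹' V p)}

/-- Let `F` be a modal functor between modal categories, with the semantic
functor of the codomain injective on objects.  If `F` commutes with the
pullback maps of all injective functions, then `F` preserves the
interpretation of `L^PAL`: `(A, V, x ⊨ φ)` iff `(F A, V, x ⊨ φ)`. -/
theorem stmt18 (P : Type) (CA CB : PALCat)
    (F : ∀ {X : Type}, CA.Fib X → CB.Fib X)
    (hFhom : ∀ {X Y : Type} (A : CA.Fib X) (B : CA.Fib Y) (f : X → Y),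
      f ∈ CA.Hom A B → f ∈ CB.Hom (F A) (F B))
    (hmodal : ∀ (X : Type) (A : CA.Fib X), CB.sem (F A) = CA.sem A)
    (hinj : ∀ (X : Type) (B₁ B₂ : CB.Fib X), CB.sem B₁ = CB.sem B₂ → B₁ = B₂)
    (hpb : ∀ (X Y : Type) (i : X → Y), Function.Injective i →
      ∀ A : CA.Fib Y, F (CA.pb i A) = CB.pb i (F A)) :
    ∀ (X : Type) (A : CA.Fib X) (V : P → Set X) (x : X) (φ : PALForm P),
      x ∈ interp CA φ X A V ↔ x ∈ interp CB φ X (F A) V := by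
  suffices h : ∀ (φ : PALForm P) (X : Type) (A : CA.Fib X) (V : P → Set X),
      interp CA φ X A V = interp CB φ X (F A) V by
    intro X A V x φ; rw [h]
  intro φ
  induction φ with
  | atom p => intro X A V; rfl
  | conj φ ψ ih1 ih2 => intro X A V; simp only [interp, ih1, ih2]
  | neg φ ih => intro X A V; simp only [interp, ih]
  | box φ ih => intro X A V; simp only [interp, ih, hmodal]
  | annBox φ ψ ih1 ih2 =>
      intro X A V
      simp only [interp]
      rw [← ih1 X A V, ← hpb _ _ _ Subtype.val_injective A, ← ih2]
  | annDia φ ψ ih1 ih2 =>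
      intro X A V
      simp only [interp]
      rw [← ih1 X A V, ← hpb _ _ _ Subtype.val_injective A, ← ih2]
end

section
/- Conversely, under the same hypotheses, if F preserves the interpretation of L^PAL then F commutes with pullbacks of injections: if for some injection i : S ↪ X and A ∈ A_X the objects F(i*A) and i*(F A) differed, then their induced operators would disagree on some T ⊆ S, and the formula ⟨!p⟩□q under the valuation V(p) = S, V(q) = T would receive different interpretations in A and F A; hence injectivity of the semantic functor of B on objects forces F(i*A) = i*(F A). -/

private lemma stmt19_aux {X : Type} (CA CB : PALCat) (A : CA.Fib X) (B : CB.Fib X)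
    (U S : Set X) (e : U = S) (T : Set {x // x ∈ S})
    (h : {x : X | ∃ h : x ∈ U, (⟨x, h⟩ : {y : X // y ∈ U}) ∈
            CA.sem (CA.pb Subtype.val A) (Subtype.val ⁻¹' (Subtype.val '' T))} =
         {x : X | ∃ h : x ∈ U, (⟨x, h⟩ : {y : X // y ∈ U}) ∈
            CB.sem (CB.pb Subtype.val B) (Subtype.val ⁻¹' (Subtype.val '' T))}) :
    CA.sem (CA.pb (Subtype.val : {x : X // x ∈ S} → X) A) T =
      CB.sem (CB.pb (Subtype.val : {x : X // x ∈ S} → X) B) T := by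
  subst e
  rw [Set.preimage_image_eq T Subtype.val_injective] at h
  ext ⟨x, hx⟩
  constructor <;> intro hs
  · obtain ⟨hm, hmem⟩ := (Set.ext_iff.mp h x).mp ⟨hx, hs⟩
    exact hmem
  · obtain ⟨hm, hmem⟩ := (Set.ext_iff.mp h x).mpr ⟨hx, hs⟩
    exact hmem

/-- Conversely: let `F` be a modal functor between modal categories, with the
semantic functor of the codomain injective on objects (and with at least two
distinct propositional variables available, as used by the formula `⟨!p⟩□q`).
If `F` preserves the interpretation of `L^PAL`, then `F` commutes with the
pullbacks of injections (inclusions `i : S ↪ X` of subsets):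
`F (i* A) = i* (F A)`. -/
theorem stmt19 (P : Type) (hP : ∃ p q : P, p ≠ q) (CA CB : PALCat)
    (F : ∀ {X : Type}, CA.Fib X → CB.Fib X)
    (hFhom : ∀ {X Y : Type} (A : CA.Fib X) (B : CA.Fib Y) (f : X → Y),
      f ∈ CA.Hom A B → f ∈ CB.Hom (F A) (F B))
    (hmodal : ∀ (X : Type) (A : CA.Fib X), CB.sem (F A) = CA.sem A)
    (hinj : ∀ (X : Type) (B₁ B₂ : CB.Fib X), CB.sem B₁ = CB.sem B₂ → B₁ = B₂)
    (hpres : ∀ (X : Type) (A : CA.Fib X) (V : P → Set X) (φ : PALForm P),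
      interp CA φ X A V = interp CB φ X (F A) V) :
    ∀ (X : Type) (S : Set X) (A : CA.Fib X),
      F (CA.pb (Subtype.val : {x : X // x ∈ S} → X) A) =
        CB.pb (Subtype.val : {x : X // x ∈ S} → X) (F A) := by
  obtain ⟨p, q, hpq⟩ := hP
  intro X S A
  apply hinj
  rw [hmodal]
  funext T
  classical
  set V : P → Set X := fun r => if r = p then S else Subtype.val '' T with hV
  have hVp : V p = S := if_pos rfl
  have hVq : V q = Subtype.val '' T := if_neg (Ne.symm hpq)
  have h := hpres X A V (.annDia (.atom p) (.box (.atom q)))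
  simp only [interp] at h
  rw [hVq] at h
  exact stmt19_aux CA CB A (F A) (V p) S hVp T h
end
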